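/- Let V be a module over ℝ, Ψ : V → V a linear endomorphism, and W ⊆ V a submodule with Ψ(W) ⊆ W. Suppose there are submodules A₀, A₁, …, A_N of V with A₀ + W = V and A_N ⊆ W, and nonzero real numbers λ₀, …, λ_{N-1} such that (Ψ − λ_k·id)(A_k) ⊆ A_{k+1} + W for every k < N. Then for every U ∈ V there exist nonzero real numbers c₁, …, c_ℓ such that ((Ψ + c₁·id) ∘ ⋯ ∘ (Ψ + c_ℓ·id)) U ∈ W. -/
import Mathlib

private lemma foldr_append_single {V : Type*} [AddCommGroup V] [Module ℝ V]
    (Ψ : V →ₗ[ℝ] V) (c : ℝ) :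
    ∀ (cs : List ℝ) (U : V),
      ((cs ++ [c]).foldr (fun c f => (Ψ + c • (LinearMap.id : V →ₗ[ℝ] V)) ∘ₗ f)
        LinearMap.id) U
      = (cs.foldr (fun c f => (Ψ + c • (LinearMap.id : V →ₗ[ℝ] V)) ∘ₗ f)
        LinearMap.id) ((Ψ + c • (LinearMap.id : V →ₗ[ℝ] V)) U) := by
  intro cs
  induction cs with
  | nil => intro U; simp
  | cons a cs ih =>
    intro U
    simp only [List.cons_append, List.foldr_cons, LinearMap.comp_apply]
    rw [ih]

/-- Reduction modulo a `Ψ`-invariant submodule `W`: if `A₀ + W = V`,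
`A_N ⊆ W`, and `(Ψ − λ_k)(A_k) ⊆ A_{k+1} + W` with all `λ_k ≠ 0`, then every
`U ∈ V` can be pushed into `W` by a composition of maps `Ψ + cᵢ·id` with all
`cᵢ ≠ 0`. -/
theorem stmt_3 {V : Type*} [AddCommGroup V] [Module ℝ V]
    (Ψ : V →ₗ[ℝ] V)
    (W : Submodule ℝ V) (hW : ∀ x ∈ W, Ψ x ∈ W)
    (N : ℕ) (A : ℕ → Submodule ℝ V)
    (hA0 : A 0 ⊔ W = ⊤)
    (hAN : A N ≤ W)
    (lam : ℕ → ℝ) (hlam : ∀ k < N, lam k ≠ 0)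
    (hstep : ∀ k < N, ∀ x ∈ A k, Ψ x - lam k • x ∈ A (k + 1) ⊔ W) :
    ∀ U : V, ∃ cs : List ℝ, cs ≠ [] ∧ (∀ c ∈ cs, c ≠ 0) ∧
      (cs.foldr (fun c f => (Ψ + c • (LinearMap.id : V →ₗ[ℝ] V)) ∘ₗ f)
        LinearMap.id) U ∈ W := by
  have key : ∀ d k, k + d = N → ∀ U ∈ A k ⊔ W,
      ∃ cs : List ℝ, (∀ c ∈ cs, c ≠ 0) ∧
        (cs.foldr (fun c f => (Ψ + c • (LinearMap.id : V →ₗ[ℝ] V)) ∘ₗ f)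
          LinearMap.id) U ∈ W := by
    intro d
    induction d with
    | zero =>
      intro k hk U hU
      refine ⟨[], by simp, ?_⟩
      simp only [Nat.add_zero] at hk
      subst hk
      have : A k ⊔ W ≤ W := sup_le hAN le_rfl
      simpa using this hU
    | succ d ih =>
      intro k hk U hU
      have hkN : k < N := by omega
      -- decompose U
      obtain ⟨a, ha, w, hw, rfl⟩ := Submodule.mem_sup.mp hU
      have h1 : Ψ a - lam k • a ∈ A (k + 1) ⊔ W := hstep k hkN a ha
      have h2 : Ψ w - lam k • w ∈ W := W.sub_mem (hW w hw) (W.smul_mem _ hw)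
      have h3 : (Ψ + (-lam k) • (LinearMap.id : V →ₗ[ℝ] V)) (a + w)
          ∈ A (k + 1) ⊔ W := by
        have : (Ψ + (-lam k) • (LinearMap.id : V →ₗ[ℝ] V)) (a + w)
            = (Ψ a - lam k • a) + (Ψ w - lam k • w) := by
          simp [sub_eq_add_neg, map_add]
        rw [this]
        exact Submodule.add_mem _ h1 (Submodule.mem_sup_right h2)
      obtain ⟨cs, hcs, hmem⟩ := ih (k + 1) (by omega) _ h3
      refine ⟨cs ++ [-lam k], ?_, ?_⟩
      · intro c hc
        rcases List.mem_append.mp hc with h | h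
        · exact hcs c h
        · simp only [List.mem_singleton] at h
          subst h
          simpa using hlam k hkN
      · rw [foldr_append_single]
        exact hmem
  intro U
  obtain ⟨cs, hcs, hmem⟩ := key N 0 (by omega) U (by rw [hA0]; trivial)
  refine ⟨1 :: cs, by simp, ?_, ?_⟩
  · intro c hc
    rcases List.mem_cons.mp hc with h | h
    · subst h; norm_num
    · exact hcs c h
  · simp only [List.foldr_cons, LinearMap.comp_apply, LinearMap.add_apply,
      LinearMap.smul_apply, LinearMap.id_apply]
    exact W.add_mem (hW _ hmem) (W.smul_mem _ hmem)
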